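/- arXiv:2101.06936 — 2 statements merged into one kernel-verified Lean document; each statement's English description precedes it below -/
import Mathlib

section
/- Let (X_n) be a Markov chain on ℝ^d with initial distribution γ₀ and transition kernel P satisfying W₁(Pⁿ(x,·), Pⁿ(y,·)) ≤ D κⁿ |x−y| for all n and all x,y, with D ≥ 1 and κ ∈ (0,1), and suppose sup_{n≥0} (E|X_n|^q)^{1/q} ≤ 1 for some q > 1. Let μ be the invariant measure. Then for every α ∈ (0,1] and every bounded α-Hölder continuous function f : ℝ^d → ℂ, and every n ∈ ℕ, |E f(X_n) − μ(f)| ≤ 2 D^α κ^{αn} Hol_α(f), where Hol_α(f) = sup_{x≠y} |f(x)−f(y)|/|x−y|^α. -/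
open MeasureTheory ProbabilityTheory Real

/-- The 1-Wasserstein distance with respect to a cost `ρ`:
infimum over couplings with integrable cost of the integral of the cost. -/
noncomputable def W1 {β : Type*} [MeasurableSpace β] (ρ : β → β → ℝ)
    (μ ν : Measure β) : ℝ :=
  sInf { c | ∃ pi : Measure (β × β), IsProbabilityMeasure pi ∧
    pi.map Prod.fst = μ ∧ pi.map Prod.snd = ν ∧
    Integrable (fun p => ρ p.1 p.2) pi ∧ c = ∫ p, ρ p.1 p.2 ∂pi }

/-- `n`-fold iteration of a Markov kernel. -/
noncomputable def kIter {β : Type*} [MeasurableSpace β] (P : Kernel β β) : ℕ → Kernel β β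
  | 0 => Kernel.id
  | n + 1 => P ∘ₖ kIter P n

/-- `(X n)` is a time-homogeneous Markov chain with transition kernel `P`
under the probability measure `Pr`. -/
structure IsMarkovChain {Ω β : Type*} [MeasurableSpace Ω] [MeasurableSpace β]
    (Pr : Measure Ω) (P : Kernel β β) (X : ℕ → Ω → β) : Prop where
  meas : ∀ n, Measurable (X n)
  markov : ∀ (n : ℕ) (g : (Fin (n + 1) → β) → ℝ) (f : β → ℝ),
    Measurable g → Measurable f →
    (∃ Cg, ∀ v, |g v| ≤ Cg) → (∃ Cf, ∀ x, |f x| ≤ Cf) →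
    ∫ ω, g (fun i => X i ω) * f (X (n + 1) ω) ∂Pr
      = ∫ ω, g (fun i => X i ω) * (∫ y, f y ∂(P (X n ω))) ∂Pr

/-- The empirical measure `μ_n = n⁻¹ ∑_{i=1}^n δ_{X_i}`. -/
noncomputable def empMeas {Ω β : Type*} [MeasurableSpace β] (X : ℕ → Ω → β)
    (n : ℕ) (ω : Ω) : Measure β :=
  (n : ENNReal)⁻¹ • ∑ i ∈ Finset.Icc 1 n, Measure.dirac (X i ω)

/-! The law of `X n` is `γ₀ Pⁿ` and `μ = μ Pⁿ`, so the bias is `γ₀(g) - μ(g)` for `g = Pⁿ f`.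
Integrating the Hölder bound of `f` along any coupling and applying Jensen to the concave map
`t ↦ t ^ α` gives `|ν₁(f) - ν₂(f)| ≤ H · W₁(ν₁, ν₂) ^ α`; with the contraction this makes `g`
Hölder with constant `H (D κⁿ) ^ α` (wherever `Pⁿ(x, ·)` has a first moment, which the moment
bound guarantees almost surely). Coupling `γ₀` and `μ` independently, `(Y, Z) ∼ γ₀ ⊗ μ`, the
same argument bounds the bias by `H (D κⁿ) ^ α (E|Y - Z|) ^ α`, and `E|Y - Z| ≤ 2` because the
`q`-th moments, hence the first moments, are at most `1`. -/

open Filter Topology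

section Kernel

variable {α β : Type*} [MeasurableSpace α] [MeasurableSpace β]

instance isMarkovKernel_kIter (P : Kernel β β) [IsMarkovKernel P] (n : ℕ) :
    IsMarkovKernel (kIter P n) := by
  induction n with
  | zero => rw [kIter]; infer_instance
  | succ n ih => rw [kIter]; infer_instance

lemma bind_kIter_zero (P : Kernel β β) (ν : Measure β) : ν.bind (kIter P 0) = ν :=
  Measure.id_comp

lemma bind_kIter_succ (P : Kernel β β) (ν : Measure β) (n : ℕ) :
    ν.bind (kIter P (n + 1)) = (ν.bind (kIter P n)).bind P :=
  Measure.comp_assoc.symm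

lemma bind_kIter_of_bind_eq_self {P : Kernel β β} {μ : Measure β} (hinv : μ.bind P = μ)
    (n : ℕ) : μ.bind (kIter P n) = μ := by
  induction n with
  | zero => exact bind_kIter_zero P μ
  | succ n ih => rw [bind_kIter_succ, ih, hinv]

lemma integral_bind {E : Type*} [NormedAddCommGroup E] [NormedSpace ℝ E] {ν : Measure α}
    {κ : Kernel α β} {f : β → E} (hf : Integrable f (ν.bind κ)) :
    ∫ y, f y ∂(ν.bind κ) = ∫ x, ∫ y, f y ∂(κ x) ∂ν := by
  rw [Measure.comp_eq_comp_const_apply] at hf ⊢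
  rw [Kernel.integral_comp hf, Kernel.const_apply]

end Kernel

namespace IsMarkovChain

variable {Ω β : Type*} [MeasurableSpace Ω] [MeasurableSpace β] {Pr : Measure Ω}
  {P : Kernel β β} {X : ℕ → Ω → β}

lemma map_succ [IsProbabilityMeasure Pr] [IsMarkovKernel P] (hX : IsMarkovChain Pr P X)
    (n : ℕ) : Pr.map (X (n + 1)) = (Pr.map (X n)).bind P := by
  refine Measure.ext fun s hs => ?_
  have hind : StronglyMeasurable (s.indicator (1 : β → ℝ)) :=
    stronglyMeasurable_one.indicator hs
  have hbound : ∀ y, |s.indicator (1 : β → ℝ) y| ≤ 1 := fun y => by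
    by_cases hy : y ∈ s <;> simp [hy]
  have hstep := hX.markov n (fun _ => 1) (s.indicator 1) measurable_const hind.measurable
    ⟨1, fun _ => by simp⟩ ⟨1, hbound⟩
  simp only [one_mul] at hstep
  rw [← ENNReal.toReal_eq_toReal_iff' (measure_ne_top _ _) (measure_ne_top _ _),
    ← measureReal_def, ← measureReal_def, ← integral_indicator_one hs,
    ← integral_indicator_one hs,
    integral_bind (.of_bound hind.aestronglyMeasurable 1 (ae_of_all _ hbound)),
    integral_map (hX.meas n).aemeasurable hind.integral_kernel.aestronglyMeasurable,
    integral_map (hX.meas (n + 1)).aemeasurable hind.aestronglyMeasurable]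
  exact hstep

lemma map_eq_bind_kIter [IsProbabilityMeasure Pr] [IsMarkovKernel P]
    (hX : IsMarkovChain Pr P X) (n : ℕ) : Pr.map (X n) = (Pr.map (X 0)).bind (kIter P n) := by
  induction n with
  | zero => exact (bind_kIter_zero P _).symm
  | succ n ih => rw [hX.map_succ, ih, bind_kIter_succ]

end IsMarkovChain

lemma continuous_of_holder {β E : Type*} [PseudoMetricSpace β] [SeminormedAddCommGroup E]
    {f : β → E} {α H : ℝ} (hα : 0 < α) (hf : ∀ x y, ‖f x - f y‖ ≤ H * dist x y ^ α) :
    Continuous f := by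
  refine continuous_iff_continuousAt.2 fun x => tendsto_iff_norm_sub_tendsto_zero.2 ?_
  have hcont : Continuous fun y => H * dist y x ^ α :=
    continuous_const.mul
      ((Real.continuous_rpow_const hα.le).comp (continuous_id.dist continuous_const))
  have hlim : Tendsto (fun y => H * dist y x ^ α) (𝓝 x) (𝓝 0) := by
    simpa [Real.zero_rpow hα.ne'] using hcont.tendsto x
  exact squeeze_zero (fun _ => norm_nonneg _) (fun y => hf y x) hlim

section Jensen

variable {γ : Type*} [MeasurableSpace γ] {ν : Measure γ} {g : γ → ℝ} {α : ℝ}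

lemma MeasureTheory.Integrable.rpow_of_le_one [IsFiniteMeasure ν] (hg0 : ∀ x, 0 ≤ g x)
    (hg : Integrable g ν) (hα0 : 0 ≤ α) (hα1 : α ≤ 1) : Integrable (fun x => g x ^ α) ν := by
  have hbound : ∀ x, ‖g x ^ α‖ ≤ 1 + g x := fun x => by
    rw [Real.norm_of_nonneg (Real.rpow_nonneg (hg0 x) α)]
    rcases le_total (g x) 1 with h | h
    · linarith [Real.rpow_le_one (hg0 x) h hα0, hg0 x]
    · linarith [Real.rpow_le_self_of_one_le h hα1]
  exact ((integrable_const 1).add hg).mono'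
    ((Real.continuous_rpow_const hα0).comp_aestronglyMeasurable hg.1) (ae_of_all _ hbound)

lemma integral_rpow_le_rpow_integral [IsProbabilityMeasure ν] (hg0 : ∀ x, 0 ≤ g x)
    (hg : Integrable g ν) (hα0 : 0 ≤ α) (hα1 : α ≤ 1) :
    ∫ x, g x ^ α ∂ν ≤ (∫ x, g x ∂ν) ^ α :=
  (Real.concaveOn_rpow hα0 hα1).le_map_integral (Real.continuous_rpow_const hα0).continuousOn
    isClosed_Ici (ae_of_all _ hg0) hg (hg.rpow_of_le_one hg0 hα0 hα1)

end Jensen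

section Coupling

variable {β E : Type*} [MeasurableSpace β] [NormedAddCommGroup E] [NormedSpace ℝ E]
  {ν₁ ν₂ : Measure β} {ρ : Measure (β × β)} {α H : ℝ}

lemma norm_integral_sub_le_of_coupling [PseudoMetricSpace β] [IsProbabilityMeasure ρ]
    (h₁ : ρ.map Prod.fst = ν₁) (h₂ : ρ.map Prod.snd = ν₂) {f : β → E}
    (hf₁ : Integrable f ν₁) (hf₂ : Integrable f ν₂)
    (hρ : Integrable (fun p : β × β => dist p.1 p.2) ρ) (hα0 : 0 ≤ α) (hα1 : α ≤ 1)
    (hH : 0 ≤ H) (hf : ∀ᵐ p ∂ρ, ‖f p.1 - f p.2‖ ≤ H * dist p.1 p.2 ^ α) :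
    ‖∫ x, f x ∂ν₁ - ∫ x, f x ∂ν₂‖ ≤ H * (∫ p, dist p.1 p.2 ∂ρ) ^ α := by
  subst h₁ h₂
  have hi₁ : Integrable (fun p : β × β => f p.1) ρ :=
    (integrable_map_measure hf₁.1 measurable_fst.aemeasurable).1 hf₁
  have hi₂ : Integrable (fun p : β × β => f p.2) ρ :=
    (integrable_map_measure hf₂.1 measurable_snd.aemeasurable).1 hf₂
  rw [integral_map measurable_fst.aemeasurable hf₁.1,
    integral_map measurable_snd.aemeasurable hf₂.1, ← integral_sub hi₁ hi₂]
  calc ‖∫ p, (f p.1 - f p.2) ∂ρ‖ ≤ ∫ p, ‖f p.1 - f p.2‖ ∂ρ := norm_integral_le_integral_norm _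
    _ ≤ ∫ p, H * dist p.1 p.2 ^ α ∂ρ :=
        integral_mono_ae (hi₁.sub hi₂).norm
          ((hρ.rpow_of_le_one (fun _ => dist_nonneg) hα0 hα1).const_mul H) hf
    _ = H * ∫ p, dist p.1 p.2 ^ α ∂ρ := integral_const_mul _ _
    _ ≤ H * (∫ p, dist p.1 p.2 ∂ρ) ^ α := mul_le_mul_of_nonneg_left
        (integral_rpow_le_rpow_integral (fun _ => dist_nonneg) hρ hα0 hα1) hH

variable [NormedAddCommGroup β]

lemma integrable_fst_snd_of_coupling (h₁ : ρ.map Prod.fst = ν₁) (h₂ : ρ.map Prod.snd = ν₂)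
    (hν₁ : Integrable id ν₁) (hν₂ : Integrable id ν₂) :
    Integrable Prod.fst ρ ∧ Integrable Prod.snd ρ := by
  subst h₁ h₂
  exact ⟨(integrable_map_measure hν₁.1 measurable_fst.aemeasurable).1 hν₁,
    (integrable_map_measure hν₂.1 measurable_snd.aemeasurable).1 hν₂⟩

lemma integrable_dist_of_coupling (h₁ : ρ.map Prod.fst = ν₁) (h₂ : ρ.map Prod.snd = ν₂)
    (hν₁ : Integrable id ν₁) (hν₂ : Integrable id ν₂) :
    Integrable (fun p : β × β => dist p.1 p.2) ρ := by
  obtain ⟨hi₁, hi₂⟩ := integrable_fst_snd_of_coupling h₁ h₂ hν₁ hν₂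
  simpa only [dist_eq_norm, Pi.sub_apply] using (hi₁.sub hi₂).norm

lemma integral_dist_le_of_coupling (h₁ : ρ.map Prod.fst = ν₁) (h₂ : ρ.map Prod.snd = ν₂)
    (hν₁ : Integrable id ν₁) (hν₂ : Integrable id ν₂) :
    ∫ p, dist p.1 p.2 ∂ρ ≤ ∫ x, ‖x‖ ∂ν₁ + ∫ x, ‖x‖ ∂ν₂ := by
  obtain ⟨hi₁, hi₂⟩ := integrable_fst_snd_of_coupling h₁ h₂ hν₁ hν₂
  subst h₁ h₂
  rw [integral_map (f := (‖·‖)) measurable_fst.aemeasurable hν₁.1.norm,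
    integral_map (f := (‖·‖)) measurable_snd.aemeasurable hν₂.1.norm,
    ← integral_add hi₁.norm hi₂.norm]
  exact integral_mono (integrable_dist_of_coupling rfl rfl hν₁ hν₂) (hi₁.norm.add hi₂.norm)
    fun p => (dist_eq_norm p.1 p.2).trans_le (norm_sub_le _ _)

lemma norm_integral_sub_le_of_W1_le [IsProbabilityMeasure ν₁] [IsProbabilityMeasure ν₂]
    (hν₁ : Integrable id ν₁) (hν₂ : Integrable id ν₂) {f : β → E}
    (hf₁ : Integrable f ν₁) (hf₂ : Integrable f ν₂) (hα0 : 0 ≤ α) (hα1 : α ≤ 1) (hH : 0 ≤ H)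
    (hf : ∀ x y, ‖f x - f y‖ ≤ H * dist x y ^ α) {W : ℝ} (hW : W1 dist ν₁ ν₂ ≤ W) :
    ‖∫ x, f x ∂ν₁ - ∫ x, f x ∂ν₂‖ ≤ H * W ^ α := by
  set S := { c | ∃ pi : Measure (β × β), IsProbabilityMeasure pi ∧
    pi.map Prod.fst = ν₁ ∧ pi.map Prod.snd = ν₂ ∧
    Integrable (fun p => dist p.1 p.2) pi ∧ c = ∫ p, dist p.1 p.2 ∂pi }
  have hS : ∀ c ∈ S, ‖∫ x, f x ∂ν₁ - ∫ x, f x ∂ν₂‖ ≤ H * c ^ α := by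
    rintro c ⟨pi, hpi, h₁, h₂, hdist, rfl⟩
    exact norm_integral_sub_le_of_coupling h₁ h₂ hf₁ hf₂ hdist hα0 hα1 hH
      (ae_of_all _ fun p => hf p.1 p.2)
  have hS0 : ∀ c ∈ S, 0 ≤ c := by
    rintro c ⟨pi, -, -, -, -, rfl⟩
    exact integral_nonneg fun _ => dist_nonneg
  have hSne : S.Nonempty := ⟨_, ν₁.prod ν₂, inferInstance, Measure.fst_prod, Measure.snd_prod,
    integrable_dist_of_coupling Measure.fst_prod Measure.snd_prod hν₁ hν₂, rfl⟩
  -- `c ↦ H * c ^ α` is continuous, so the bound passes from `S` to `sInf S = W1 dist ν₁ ν₂`.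
  have hclosed : IsClosed {c : ℝ | ‖∫ x, f x ∂ν₁ - ∫ x, f x ∂ν₂‖ ≤ H * c ^ α} :=
    isClosed_le continuous_const (continuous_const.mul (Real.continuous_rpow_const hα0))
  have hW1 : ‖∫ x, f x ∂ν₁ - ∫ x, f x ∂ν₂‖ ≤ H * W1 dist ν₁ ν₂ ^ α :=
    hclosed.closure_subset_iff.2 hS (csInf_mem_closure hSne ⟨0, hS0⟩)
  exact hW1.trans (mul_le_mul_of_nonneg_left
    (Real.rpow_le_rpow (Real.sInf_nonneg hS0) hW hα0) hH)

end Coupling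

section Moments

variable {β : Type*} [NormedAddCommGroup β] [MeasurableSpace β] [BorelSpace β]
  [SecondCountableTopology β] {ν ν₁ ν₂ : Measure β} {q : ℝ}

lemma eLpNorm_id_one_le_one_of_lintegral_rpow_le_one [IsProbabilityMeasure ν] (hq : 1 ≤ q)
    (h : ∫⁻ x, ‖x‖ₑ ^ q ∂ν ≤ 1) : eLpNorm id 1 ν ≤ 1 := by
  have hq0 : 0 < q := zero_lt_one.trans_le hq
  calc eLpNorm id 1 ν ≤ eLpNorm id (ENNReal.ofReal q) ν :=
        eLpNorm_le_eLpNorm_of_exponent_le (by simpa using hq) aestronglyMeasurable_id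
    _ = (∫⁻ x, ‖x‖ₑ ^ q ∂ν) ^ (1 / q) := by
        rw [eLpNorm_eq_lintegral_rpow_enorm_toReal (by simpa using hq0) ENNReal.ofReal_ne_top,
          ENNReal.toReal_ofReal hq0.le]
        rfl
    _ ≤ 1 := ENNReal.rpow_le_one h (by positivity)

lemma integrable_id_of_lintegral_rpow_le_one [IsProbabilityMeasure ν] (hq : 1 ≤ q)
    (h : ∫⁻ x, ‖x‖ₑ ^ q ∂ν ≤ 1) : Integrable id ν :=
  memLp_one_iff_integrable.1 ⟨aestronglyMeasurable_id,
    (eLpNorm_id_one_le_one_of_lintegral_rpow_le_one hq h).trans_lt ENNReal.one_lt_top⟩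

lemma integral_norm_le_one_of_lintegral_rpow_le_one [IsProbabilityMeasure ν] (hq : 1 ≤ q)
    (h : ∫⁻ x, ‖x‖ₑ ^ q ∂ν ≤ 1) : ∫ x, ‖x‖ ∂ν ≤ 1 :=
  calc ∫ x, ‖x‖ ∂ν = (eLpNorm id 1 ν).toReal := by
        rw [eLpNorm_one_eq_lintegral_enorm]
        exact integral_norm_eq_lintegral_enorm aestronglyMeasurable_id
    _ ≤ 1 := ENNReal.toReal_le_of_le_ofReal zero_le_one
        (by simpa using eLpNorm_id_one_le_one_of_lintegral_rpow_le_one hq h)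

lemma integral_dist_prod_le_two [IsProbabilityMeasure ν₁] [IsProbabilityMeasure ν₂] (hq : 1 ≤ q)
    (h₁ : ∫⁻ x, ‖x‖ₑ ^ q ∂ν₁ ≤ 1) (h₂ : ∫⁻ x, ‖x‖ₑ ^ q ∂ν₂ ≤ 1) :
    ∫ p, dist p.1 p.2 ∂(ν₁.prod ν₂) ≤ 2 := by
  linarith [integral_dist_le_of_coupling Measure.fst_prod Measure.snd_prod
      (integrable_id_of_lintegral_rpow_le_one hq h₁) (integrable_id_of_lintegral_rpow_le_one hq h₂),
    integral_norm_le_one_of_lintegral_rpow_le_one hq h₁,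
    integral_norm_le_one_of_lintegral_rpow_le_one hq h₂]

end Moments

lemma norm_integral_bind_sub_le {β E : Type*} [NormedAddCommGroup β] [MeasurableSpace β]
    [NormedAddCommGroup E] [NormedSpace ℝ E] {K : Kernel β β} [IsMarkovKernel K] {L : ℝ}
    (hL : 0 ≤ L) (hK : ∀ x y, W1 dist (K x) (K y) ≤ L * dist x y)
    {ν₁ ν₂ : Measure β} {ρ : Measure (β × β)} [IsProbabilityMeasure ρ]
    (h₁ : ρ.map Prod.fst = ν₁) (h₂ : ρ.map Prod.snd = ν₂)
    (hK₁ : ∀ᵐ x ∂ν₁, Integrable id (K x)) (hK₂ : ∀ᵐ x ∂ν₂, Integrable id (K x))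
    (hρ : Integrable (fun p : β × β => dist p.1 p.2) ρ)
    {f : β → E} (hfm : StronglyMeasurable f) {B : ℝ} (hfB : ∀ x, ‖f x‖ ≤ B)
    {α H : ℝ} (hα0 : 0 ≤ α) (hα1 : α ≤ 1) (hH : 0 ≤ H)
    (hf : ∀ x y, ‖f x - f y‖ ≤ H * dist x y ^ α) :
    ‖∫ x, f x ∂(ν₁.bind K) - ∫ x, f x ∂(ν₂.bind K)‖
      ≤ H * L ^ α * (∫ p, dist p.1 p.2 ∂ρ) ^ α := by
  subst h₁ h₂
  have hfi : ∀ (ν : Measure β) [IsFiniteMeasure ν], Integrable f ν := fun ν _ =>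
    .of_bound hfm.aestronglyMeasurable B (ae_of_all _ hfB)
  set g : β → E := fun x => ∫ y, f y ∂(K x)
  have hgi : ∀ (ν : Measure β) [IsFiniteMeasure ν], Integrable g ν := fun ν _ =>
    .of_bound hfm.integral_kernel.aestronglyMeasurable B (ae_of_all _ fun x =>
      (norm_integral_le_of_norm_le_const (ae_of_all _ hfB)).trans_eq (by simp))
  have hg : ∀ᵐ p ∂ρ, ‖g p.1 - g p.2‖ ≤ H * L ^ α * dist p.1 p.2 ^ α := by
    filter_upwards [ae_of_ae_map measurable_fst.aemeasurable hK₁,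
      ae_of_ae_map measurable_snd.aemeasurable hK₂] with p hp₁ hp₂
    calc ‖g p.1 - g p.2‖ ≤ H * (L * dist p.1 p.2) ^ α :=
          norm_integral_sub_le_of_W1_le hp₁ hp₂ (hfi _) (hfi _) hα0 hα1 hH hf (hK _ _)
      _ = H * L ^ α * dist p.1 p.2 ^ α := by rw [Real.mul_rpow hL dist_nonneg, mul_assoc]
  have := Measure.isProbabilityMeasure_map (μ := ρ) measurable_fst.aemeasurable
  have := Measure.isProbabilityMeasure_map (μ := ρ) measurable_snd.aemeasurable
  rw [integral_bind (hfi _), integral_bind (hfi _)]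
  exact norm_integral_sub_le_of_coupling rfl rfl (hgi _) (hgi _) hρ hα0 hα1
    (mul_nonneg hH (Real.rpow_nonneg hL α)) hg

theorem bias_decay_of_holder_general {Ω : Type*} [MeasurableSpace Ω]
    (Pr : Measure Ω) [IsProbabilityMeasure Pr] (d : ℕ)
    (P : Kernel (EuclideanSpace ℝ (Fin d)) (EuclideanSpace ℝ (Fin d))) [IsMarkovKernel P]
    (X : ℕ → Ω → EuclideanSpace ℝ (Fin d)) (hchain : IsMarkovChain Pr P X)
    (D κ : ℝ) (hD : 1 ≤ D) (hκ : κ ∈ Set.Ioo (0 : ℝ) 1)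
    -- Assumption 1: W₁(Pⁿ(x,·), Pⁿ(y,·)) ≤ D κⁿ |x - y|
    (hcontr : ∀ (n : ℕ) (x y : EuclideanSpace ℝ (Fin d)),
      W1 dist (kIter P n x) (kIter P n y) ≤ D * κ ^ n * dist x y)
    (q : ℝ) (hq : 1 < q)
    -- Assumption 2 with M = 1: sup_n (E |X_n|^q)^(1/q) ≤ 1
    (hmom : ∀ n : ℕ, ∫⁻ ω, (‖X n ω‖₊ : ENNReal) ^ q ∂Pr ≤ 1)
    (μ : Measure (EuclideanSpace ℝ (Fin d))) [IsProbabilityMeasure μ] (hinv : μ.bind P = μ)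
    -- the invariant measure satisfies the same moment bound
    (hmomμ : ∫⁻ x, (‖x‖₊ : ENNReal) ^ q ∂μ ≤ 1)
    (α : ℝ) (hα : α ∈ Set.Ioc (0 : ℝ) 1)
    (f : EuclideanSpace ℝ (Fin d) → ℂ)
    -- f is bounded
    (B : ℝ) (hfB : ∀ x, ‖f x‖ ≤ B)
    -- f is α-Hölder with constant H
    (H : ℝ) (hH : 0 ≤ H)
    (hHol : ∀ x y, ‖f x - f y‖ ≤ H * dist x y ^ α)
    (n : ℕ) :
    ‖(∫ ω, f (X n ω) ∂Pr) - ∫ x, f x ∂μ‖ ≤ 2 * D ^ α * κ ^ (α * n) * H := by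
  obtain ⟨hα0, hα1⟩ := hα
  have hL : 0 ≤ D * κ ^ n := mul_nonneg (zero_le_one.trans hD) (pow_nonneg hκ.1.le n)
  have hfm : StronglyMeasurable f := (continuous_of_holder hα0 hHol).stronglyMeasurable
  have hmomX : ∀ m, ∫⁻ x, ‖x‖ₑ ^ q ∂(Pr.map (X m)) ≤ 1 := fun m => by
    rw [lintegral_map (by fun_prop) (hchain.meas m)]
    exact hmom m
  set γ₀ := Pr.map (X 0)
  have : IsProbabilityMeasure γ₀ := Measure.isProbabilityMeasure_map (hchain.meas 0).aemeasurable
  have hlaw : Pr.map (X n) = γ₀.bind (kIter P n) := hchain.map_eq_bind_kIter n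
  have hstat : μ.bind (kIter P n) = μ := bind_kIter_of_bind_eq_self hinv n
  have hμ := integrable_id_of_lintegral_rpow_le_one hq.le hmomμ
  have hKγ₀ : ∀ᵐ x ∂γ₀, Integrable id (kIter P n x) := Measure.ae_integrable_of_integrable_comp
    (integrable_id_of_lintegral_rpow_le_one hq.le (hlaw ▸ hmomX n))
  have hKμ : ∀ᵐ x ∂μ, Integrable id (kIter P n x) :=
    Measure.ae_integrable_of_integrable_comp (by rwa [hstat])
  calc ‖∫ ω, f (X n ω) ∂Pr - ∫ x, f x ∂μ‖
      = ‖∫ x, f x ∂(γ₀.bind (kIter P n)) - ∫ x, f x ∂(μ.bind (kIter P n))‖ := by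
        rw [← hlaw, hstat, integral_map (hchain.meas n).aemeasurable hfm.aestronglyMeasurable]
    _ ≤ H * (D * κ ^ n) ^ α * (∫ p, dist p.1 p.2 ∂(γ₀.prod μ)) ^ α :=
        norm_integral_bind_sub_le hL (hcontr n) Measure.fst_prod Measure.snd_prod hKγ₀ hKμ
          (integrable_dist_of_coupling Measure.fst_prod Measure.snd_prod
            (integrable_id_of_lintegral_rpow_le_one hq.le (hmomX 0)) hμ) hfm hfB
          hα0.le hα1 hH hHol
    _ ≤ H * (D * κ ^ n) ^ α * 2 := by
        gcongr
        exact (Real.rpow_le_rpow (integral_nonneg fun _ => dist_nonneg)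
          (integral_dist_prod_le_two hq.le (hmomX 0) hmomμ) hα0.le).trans
          (Real.rpow_le_self_of_one_le one_le_two hα1)
    _ = 2 * D ^ α * κ ^ (α * n) * H := by
        rw [Real.mul_rpow (zero_le_one.trans hD) (pow_nonneg hκ.1.le n), ← Real.rpow_natCast,
          ← Real.rpow_mul hκ.1.le, mul_comm (n : ℝ) α]
        ring

/-- **Lemma (bias decay for Hölder functions).** For an exponentially `W₁`-contracting
Markov chain on `ℝ^d` with `q`-th moments bounded by 1 (for the chain, the initial
distribution and the invariant measure `μ`), every bounded `α`-Hölder function `f` with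
Hölder constant `H` satisfies `|E f(X_n) - μ(f)| ≤ 2 D^α κ^(αn) H`. -/
theorem bias_decay_of_holder {Ω : Type*} [MeasurableSpace Ω]
    (Pr : Measure Ω) [IsProbabilityMeasure Pr] (d : ℕ)
    (P : Kernel (EuclideanSpace ℝ (Fin d)) (EuclideanSpace ℝ (Fin d))) [IsMarkovKernel P]
    (X : ℕ → Ω → EuclideanSpace ℝ (Fin d)) (hchain : IsMarkovChain Pr P X)
    (D κ : ℝ) (hD : 1 ≤ D) (hκ : κ ∈ Set.Ioo (0 : ℝ) 1)
    -- Assumption 1: W₁(Pⁿ(x,·), Pⁿ(y,·)) ≤ D κⁿ |x - y|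
    (hcontr : ∀ (n : ℕ) (x y : EuclideanSpace ℝ (Fin d)),
      W1 dist (kIter P n x) (kIter P n y) ≤ D * κ ^ n * dist x y)
    (q : ℝ) (hq : 1 < q)
    -- Assumption 2 with M = 1: sup_n (E |X_n|^q)^(1/q) ≤ 1
    (hmom : ∀ n : ℕ, ∫⁻ ω, (‖X n ω‖₊ : ENNReal) ^ q ∂Pr ≤ 1)
    (μ : Measure (EuclideanSpace ℝ (Fin d))) [IsProbabilityMeasure μ] (hinv : μ.bind P = μ)
    -- the invariant measure satisfies the same moment bound
    (hmomμ : ∫⁻ x, (‖x‖₊ : ENNReal) ^ q ∂μ ≤ 1)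
    (α : ℝ) (hα : α ∈ Set.Ioc (0 : ℝ) 1)
    (f : EuclideanSpace ℝ (Fin d) → ℂ) (hf_meas : Measurable f)
    -- f is bounded
    (B : ℝ) (hfB : ∀ x, ‖f x‖ ≤ B)
    -- f is α-Hölder with constant H
    (H : ℝ) (hH : 0 ≤ H)
    (hHol : ∀ x y, ‖f x - f y‖ ≤ H * dist x y ^ α)
    (n : ℕ) :
    ‖(∫ ω, f (X n ω) ∂Pr) - ∫ x, f x ∂μ‖ ≤ 2 * D ^ α * κ ^ (α * n) * H :=
  bias_decay_of_holder_general Pr d P X hchain D κ hD hκ hcontr q hq hmom μ hinv hmomμ α hα f B hfB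
    H hH hHol n
end

section
/- Let (X_n) be a Markov chain on a Polish metric space (𝒳, d) with diam(𝒳) ≤ 1 and transition kernel P satisfying W₁(P(x,·), P(y,·)) ≤ κ d(x,y) for all x,y, with κ ∈ (0,1). Let μ be the invariant measure, μ_n the empirical measure, and f(x₁,…,x_n) = W₁(μ, (1/n) Σ_k δ_{x_k}). For 1 ≤ k ≤ n and x₁,…,x_{k−1} ∈ 𝒳 define Δ_k(x₁,…,x_k) = E[f(X₁,…,X_n) | X₁=x₁,…,X_k=x_k] − E[f(X₁,…,X_n) | X₁=x₁,…,X_{k−1}=x_{k−1}]. Then for all x, y ∈ 𝒳, |Δ_k(x₁,…,x_{k−1}, x) − Δ_k(x₁,…,x_{k−1}, y)| ≤ (1/n) ( Σ_{j=0}^{n−k} κ^j ) d(x,y) ≤ d(x,y) / (n(1−κ)). -/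
open MeasureTheory ProbabilityTheory Real

/-- The law of the trajectory `(X₀, X₁, …, X_n)` of the Markov chain with kernel `P`
started at the deterministic point `x`. -/
noncomputable def trajMeasure {β : Type*} [MeasurableSpace β] (P : Kernel β β) :
    (n : ℕ) → β → Measure (Fin (n + 1) → β)
  | 0, x => Measure.dirac (fun _ => x)
  | n + 1, x => (trajMeasure P n x).bind
      (fun v => (P (v (Fin.last n))).map (fun y => Fin.snoc v y))

open scoped ENNReal

/-!
The two integrals integrate `g v = W₁(μ, empirical measure of (pre, v))` against the laws of
the chain's trajectory started at `x` and at `y`. Pairing the points of two tuples couples their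
empirical measures, and `W₁(μ, ·)` is 1-Lipschitz for `W₁` (triangle inequality, through the
gluing lemma), so `g` is Lipschitz in each coordinate with weight `n⁻¹`. Integrating out the last
coordinate against `P` keeps such a coordinatewise bound: by the easy direction of
Kantorovich–Rubinstein duality and the contraction hypothesis, the weight of the last coordinate
is multiplied by `κ` and added to that of the previous one. After `n - k` steps the weight of the
starting point is `n⁻¹ ∑_{j ≤ n - k} κ ^ j`, and the geometric series is at most `(1 - κ)⁻¹`.
-/

lemma abs_integral_le_of_forall_abs_le {α : Type*} [MeasurableSpace α] {ν : Measure α}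
    [IsProbabilityMeasure ν] {f : α → ℝ} {C : ℝ} (h : ∀ a, |f a| ≤ C) : |∫ a, f a ∂ν| ≤ C := by
  simpa using norm_integral_le_of_norm_le_const (μ := ν) (f := f) (.of_forall h)

section Gluing

variable {α β γ : Type*} [MeasurableSpace α] [MeasurableSpace β] [MeasurableSpace γ]
  [StandardBorelSpace β] [StandardBorelSpace γ]

lemma exists_gluing (ρ : Measure (α × β)) (η : Measure (α × γ))
    [IsProbabilityMeasure ρ] [IsProbabilityMeasure η] (h : ρ.fst = η.fst) :
    ∃ τ : Measure (α × β × γ), IsProbabilityMeasure τ ∧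
      τ.map (fun p => (p.1, p.2.1)) = ρ ∧ τ.map (fun p => (p.1, p.2.2)) = η := by
  have : Nonempty β := nonempty_of_isProbabilityMeasure ρ.snd
  have : Nonempty γ := nonempty_of_isProbabilityMeasure η.snd
  refine ⟨ρ.fst ⊗ₘ (ρ.condKernel ×ₖ η.condKernel), inferInstance, ?_, ?_⟩
  · calc _ = ρ.fst ⊗ₘ (ρ.condKernel ×ₖ η.condKernel).fst := by
          rw [Kernel.fst_eq, Measure.compProd_map measurable_fst]; rfl
      _ = ρ := by rw [Kernel.fst_prod, ρ.disintegrate]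
  · calc _ = η.fst ⊗ₘ (ρ.condKernel ×ₖ η.condKernel).snd := by
          rw [← h, Kernel.snd_eq, Measure.compProd_map measurable_snd]; rfl
      _ = η := by rw [Kernel.snd_prod, η.disintegrate]

end Gluing

section Wasserstein

variable {X : Type*} [MeasurableSpace X]

def couplingCosts (ρ : X → X → ℝ) (μ ν : Measure X) : Set ℝ :=
  {c | ∃ γ : Measure (X × X), IsProbabilityMeasure γ ∧ γ.map Prod.fst = μ ∧
    γ.map Prod.snd = ν ∧ Integrable (fun p => ρ p.1 p.2) γ ∧ c = ∫ p, ρ p.1 p.2 ∂γ}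

lemma W1_eq_sInf_couplingCosts (ρ : X → X → ℝ) (μ ν : Measure X) :
    W1 ρ μ ν = sInf (couplingCosts ρ μ ν) := rfl

lemma nonneg_of_mem_couplingCosts {ρ : X → X → ℝ} (hρ : ∀ x y, 0 ≤ ρ x y) {μ ν : Measure X}
    {c : ℝ} (hc : c ∈ couplingCosts ρ μ ν) : 0 ≤ c := by
  obtain ⟨γ, -, -, -, -, rfl⟩ := hc
  exact integral_nonneg fun _ => hρ _ _

lemma W1_nonneg {ρ : X → X → ℝ} (hρ : ∀ x y, 0 ≤ ρ x y) (μ ν : Measure X) : 0 ≤ W1 ρ μ ν :=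
  Real.sInf_nonneg fun _ => nonneg_of_mem_couplingCosts hρ

lemma W1_le_integral {ρ : X → X → ℝ} (hρ : ∀ x y, 0 ≤ ρ x y) {μ ν : Measure X}
    {γ : Measure (X × X)} [IsProbabilityMeasure γ] (h₁ : γ.map Prod.fst = μ)
    (h₂ : γ.map Prod.snd = ν) (hint : Integrable (fun p => ρ p.1 p.2) γ) :
    W1 ρ μ ν ≤ ∫ p, ρ p.1 p.2 ∂γ :=
  csInf_le ⟨0, fun _ => nonneg_of_mem_couplingCosts hρ⟩ ⟨γ, inferInstance, h₁, h₂, hint, rfl⟩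

lemma abs_W1_le_one {ρ : X → X → ℝ} (hρ₀ : ∀ x y, 0 ≤ ρ x y) (hρ₁ : ∀ x y, ρ x y ≤ 1)
    (μ ν : Measure X) : |W1 ρ μ ν| ≤ 1 := by
  rw [abs_of_nonneg (W1_nonneg hρ₀ μ ν)]
  rcases (couplingCosts ρ μ ν).eq_empty_or_nonempty with hempty | ⟨_, γ, hγ, h₁, h₂, hint, rfl⟩
  · rw [W1_eq_sInf_couplingCosts, hempty, Real.sInf_empty]
    exact zero_le_one
  · calc W1 ρ μ ν ≤ ∫ p, ρ p.1 p.2 ∂γ := W1_le_integral hρ₀ h₁ h₂ hint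
      _ ≤ ∫ _, 1 ∂γ := integral_mono hint (integrable_const 1) fun _ => hρ₁ _ _
      _ = 1 := by simp

end Wasserstein

section Empirical

variable {X : Type*} [MeasurableSpace X]

noncomputable def empiricalMeasure {n : ℕ} (a : Fin n → X) : Measure X :=
  (n : ℝ≥0∞)⁻¹ • ∑ i, Measure.dirac (a i)

instance {n : ℕ} [NeZero n] (a : Fin n → X) : IsProbabilityMeasure (empiricalMeasure a) :=
  ⟨by simp [empiricalMeasure, ENNReal.inv_mul_cancel (NeZero.ne (n : ℝ≥0∞))]⟩

lemma map_empiricalMeasure {Y : Type*} [MeasurableSpace Y] {f : X → Y} (hf : Measurable f)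
    {n : ℕ} (a : Fin n → X) : (empiricalMeasure a).map f = empiricalMeasure (f ∘ a) := by
  simp [empiricalMeasure, Measure.map_finset_sum' hf.aemeasurable, Measure.map_dirac' hf]

lemma integral_empiricalMeasure [MeasurableSingletonClass X] (f : X → ℝ) {n : ℕ} (a : Fin n → X) :
    ∫ x, f x ∂empiricalMeasure a = (n : ℝ)⁻¹ * ∑ i, f (a i) := by
  simp [empiricalMeasure, integral_smul_measure,
    integral_finsetSum_measure fun _ _ => integrable_dirac enorm_lt_top]

end Empirical

section MetricWasserstein

variable {X : Type*} [MetricSpace X] [SecondCountableTopology X] [MeasurableSpace X]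
  [BorelSpace X]

lemma integrable_dist_of_diam_le_one (hdiam : ∀ x y : X, dist x y ≤ 1) {Ω : Type*}
    [MeasurableSpace Ω] {ν : Measure Ω} [IsFiniteMeasure ν] {f g : Ω → X} (hf : Measurable f)
    (hg : Measurable g) : Integrable (fun ω => dist (f ω) (g ω)) ν :=
  .of_bound (hf.dist hg).aestronglyMeasurable 1 <| .of_forall fun _ => by
    rw [Real.norm_of_nonneg dist_nonneg]
    exact hdiam _ _

lemma W1_dist_le_integral (hdiam : ∀ x y : X, dist x y ≤ 1) {μ ν : Measure X}
    {γ : Measure (X × X)} [IsProbabilityMeasure γ] (h₁ : γ.map Prod.fst = μ)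
    (h₂ : γ.map Prod.snd = ν) : W1 dist μ ν ≤ ∫ p, dist p.1 p.2 ∂γ :=
  W1_le_integral (ρ := dist) (fun _ _ => dist_nonneg) h₁ h₂
    (integrable_dist_of_diam_le_one hdiam measurable_fst measurable_snd)

lemma le_W1_of_forall (hdiam : ∀ x y : X, dist x y ≤ 1) {μ ν : Measure X}
    [IsProbabilityMeasure μ] [IsProbabilityMeasure ν] {c : ℝ}
    (h : ∀ γ : Measure (X × X), IsProbabilityMeasure γ → γ.map Prod.fst = μ →
      γ.map Prod.snd = ν → c ≤ ∫ p, dist p.1 p.2 ∂γ) :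
    c ≤ W1 dist μ ν :=
  le_csInf ⟨_, μ.prod ν, inferInstance, by simp, by simp,
      integrable_dist_of_diam_le_one hdiam measurable_fst measurable_snd, rfl⟩
    fun _ ⟨γ, hγ, h₁, h₂, _, hc⟩ => hc ▸ h γ hγ h₁ h₂

lemma integral_sub_integral_le_mul_W1 (hdiam : ∀ x y : X, dist x y ≤ 1) {h : X → ℝ}
    (hm : Measurable h) {C : ℝ} (hb : ∀ x, |h x| ≤ C) {L : ℝ} (hL : 0 ≤ L)
    (hLip : ∀ x y, |h x - h y| ≤ L * dist x y) (ν₁ ν₂ : Measure X)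
    [IsProbabilityMeasure ν₁] [IsProbabilityMeasure ν₂] :
    ∫ x, h x ∂ν₁ - ∫ x, h x ∂ν₂ ≤ L * W1 dist ν₁ ν₂ := by
  have key : ∀ γ : Measure (X × X), IsProbabilityMeasure γ → γ.map Prod.fst = ν₁ →
      γ.map Prod.snd = ν₂ → ∫ x, h x ∂ν₁ - ∫ x, h x ∂ν₂ ≤ L * ∫ p, dist p.1 p.2 ∂γ := by
    intro γ _ h₁ h₂
    have hint : ∀ f : X × X → X, Measurable f → Integrable (fun p => h (f p)) γ :=
      fun f hf => .of_bound (hm.comp hf).aestronglyMeasurable C (.of_forall fun _ => hb _)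
    rw [← h₁, ← h₂, integral_map measurable_fst.aemeasurable hm.aestronglyMeasurable,
      integral_map measurable_snd.aemeasurable hm.aestronglyMeasurable,
      ← integral_sub (hint _ measurable_fst) (hint _ measurable_snd), ← integral_const_mul]
    exact integral_mono ((hint _ measurable_fst).sub (hint _ measurable_snd))
      ((integrable_dist_of_diam_le_one hdiam measurable_fst measurable_snd).const_mul L)
      fun p => (le_abs_self _).trans (hLip _ _)
  rcases hL.eq_or_lt with rfl | hL
  · simpa using key (ν₁.prod ν₂) inferInstance (by simp) (by simp)
  · rw [← div_le_iff₀' hL]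
    exact le_W1_of_forall hdiam fun γ hγ h₁ h₂ => (div_le_iff₀' hL).2 (key γ hγ h₁ h₂)

lemma exists_coupling_integral_dist_le_add [StandardBorelSpace X]
    (hdiam : ∀ x y : X, dist x y ≤ 1) (γ₁ γ₂ : Measure (X × X)) [IsProbabilityMeasure γ₁]
    [IsProbabilityMeasure γ₂] (h : γ₁.map Prod.snd = γ₂.map Prod.fst) :
    ∃ γ : Measure (X × X), IsProbabilityMeasure γ ∧ γ.map Prod.fst = γ₁.map Prod.fst ∧
      γ.map Prod.snd = γ₂.map Prod.snd ∧
      ∫ p, dist p.1 p.2 ∂γ ≤ ∫ p, dist p.1 p.2 ∂γ₁ + ∫ p, dist p.1 p.2 ∂γ₂ := by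
  have := Measure.isProbabilityMeasure_map (μ := γ₁) measurable_swap.aemeasurable
  obtain ⟨τ, _, hτ₁, hτ₂⟩ := exists_gluing (γ₁.map Prod.swap) γ₂ <| by
    rw [Measure.fst_map_swap, Measure.snd, Measure.fst, h]
  have hm₁ : Measurable fun p : X × X × X => (p.1, p.2.1) := by fun_prop
  have hm₂ : Measurable fun p : X × X × X => (p.1, p.2.2) := by fun_prop
  have hint : ∀ f g : X × X × X → X, Measurable f → Measurable g →
      Integrable (fun p => dist (f p) (g p)) τ :=
    fun _ _ => integrable_dist_of_diam_le_one hdiam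
  refine ⟨τ.snd, inferInstance, ?_, ?_, ?_⟩
  · rw [Measure.snd, Measure.map_map measurable_fst measurable_snd,
      show Prod.fst ∘ Prod.snd = Prod.snd ∘ fun p : X × X × X => (p.1, p.2.1) from rfl,
      ← Measure.map_map measurable_snd hm₁, hτ₁, Measure.map_map measurable_snd measurable_swap]
    rfl
  · rw [Measure.snd, Measure.map_map measurable_snd measurable_snd,
      show Prod.snd ∘ Prod.snd = Prod.snd ∘ fun p : X × X × X => (p.1, p.2.2) from rfl,
      ← Measure.map_map measurable_snd hm₂, hτ₂]
  have hswap : ∫ p, dist p.1 p.2 ∂γ₁ = ∫ q, dist q.2 q.1 ∂(γ₁.map Prod.swap) :=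
    (integral_map measurable_swap.aemeasurable
      (continuous_snd.dist continuous_fst).aestronglyMeasurable).symm
  calc ∫ p, dist p.1 p.2 ∂τ.snd = ∫ p, dist p.2.1 p.2.2 ∂τ :=
        integral_map measurable_snd.aemeasurable (by fun_prop : Measurable _).aestronglyMeasurable
    _ ≤ ∫ p, (dist p.2.1 p.1 + dist p.1 p.2.2) ∂τ :=
        integral_mono (hint _ _ (by fun_prop) (by fun_prop))
          ((hint _ _ (by fun_prop) (by fun_prop)).add (hint _ _ (by fun_prop) (by fun_prop)))
          fun _ => dist_triangle _ _ _
    _ = ∫ p, dist p.2.1 p.1 ∂τ + ∫ p, dist p.1 p.2.2 ∂τ :=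
        integral_add (hint _ _ (by fun_prop) (by fun_prop)) (hint _ _ (by fun_prop) (by fun_prop))
    _ = ∫ p, dist p.1 p.2 ∂γ₁ + ∫ p, dist p.1 p.2 ∂γ₂ := by
        rw [hswap, ← hτ₁, ← hτ₂,
          integral_map hm₁.aemeasurable (continuous_snd.dist continuous_fst).aestronglyMeasurable,
          integral_map hm₂.aemeasurable (continuous_fst.dist continuous_snd).aestronglyMeasurable]

lemma W1_triangle [StandardBorelSpace X] (hdiam : ∀ x y : X, dist x y ≤ 1) (μ ν₁ ν₂ : Measure X)
    [IsProbabilityMeasure μ] [IsProbabilityMeasure ν₁] [IsProbabilityMeasure ν₂] :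
    W1 dist μ ν₂ ≤ W1 dist μ ν₁ + W1 dist ν₁ ν₂ := by
  have key : ∀ γ₁ γ₂ : Measure (X × X), IsProbabilityMeasure γ₁ → γ₁.map Prod.fst = μ →
      γ₁.map Prod.snd = ν₁ → IsProbabilityMeasure γ₂ → γ₂.map Prod.fst = ν₁ →
      γ₂.map Prod.snd = ν₂ →
      W1 dist μ ν₂ ≤ ∫ p, dist p.1 p.2 ∂γ₁ + ∫ p, dist p.1 p.2 ∂γ₂ := by
    intro γ₁ γ₂ _ h₁ h₁' _ h₂ h₂'
    obtain ⟨γ, _, hγ₁, hγ₂, hγ⟩ :=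
      exists_coupling_integral_dist_le_add hdiam γ₁ γ₂ (h₁'.trans h₂.symm)
    exact (W1_dist_le_integral hdiam (hγ₁.trans h₁) (hγ₂.trans h₂')).trans hγ
  have h : ∀ γ₁ : Measure (X × X), IsProbabilityMeasure γ₁ → γ₁.map Prod.fst = μ →
      γ₁.map Prod.snd = ν₁ → W1 dist μ ν₂ - W1 dist ν₁ ν₂ ≤ ∫ p, dist p.1 p.2 ∂γ₁ :=
    fun γ₁ hγ₁ h₁ h₁' => sub_le_comm.1 <| le_W1_of_forall hdiam fun γ₂ hγ₂ h₂ h₂' =>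
      sub_le_iff_le_add'.2 (key γ₁ γ₂ hγ₁ h₁ h₁' hγ₂ h₂ h₂')
  linarith [le_W1_of_forall hdiam h]

lemma W1_empiricalMeasure_le (hdiam : ∀ x y : X, dist x y ≤ 1) {n : ℕ} [NeZero n]
    (a b : Fin n → X) :
    W1 dist (empiricalMeasure a) (empiricalMeasure b) ≤ (n : ℝ)⁻¹ * ∑ i, dist (a i) (b i) := by
  have h := W1_dist_le_integral hdiam (map_empiricalMeasure measurable_fst fun i => (a i, b i))
    (map_empiricalMeasure measurable_snd fun i => (a i, b i))
  rwa [integral_empiricalMeasure] at h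

lemma abs_W1_empiricalMeasure_sub_le [StandardBorelSpace X] (hdiam : ∀ x y : X, dist x y ≤ 1)
    (μ : Measure X) [IsProbabilityMeasure μ] {n : ℕ} (a b : Fin n → X) :
    |W1 dist μ (empiricalMeasure a) - W1 dist μ (empiricalMeasure b)|
      ≤ (n : ℝ)⁻¹ * ∑ i, dist (a i) (b i) := by
  rcases n.eq_zero_or_pos with rfl | hn
  · simp [Subsingleton.elim a b]
  have : NeZero n := ⟨hn.ne'⟩
  have hba : ∑ i, dist (b i) (a i) = ∑ i, dist (a i) (b i) := by simp_rw [dist_comm]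
  rw [abs_sub_le_iff]
  constructor
  · linarith [W1_triangle hdiam μ (empiricalMeasure b) (empiricalMeasure a),
      hba ▸ W1_empiricalMeasure_le hdiam b a]
  · linarith [W1_triangle hdiam μ (empiricalMeasure a) (empiricalMeasure b),
      W1_empiricalMeasure_le hdiam a b]

end MetricWasserstein

section Trajectory

variable {β : Type*} [MeasurableSpace β]

lemma measurable_finSnoc {n : ℕ} :
    Measurable fun p : (Fin n → β) × β => (Fin.snoc p.1 p.2 : Fin (n + 1) → β) := by
  refine measurable_pi_lambda _ fun j => Fin.lastCases ?_ (fun i => ?_) j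
  · simpa using measurable_snd
  · simpa using measurable_fst.eval (a := i)

noncomputable def snocKernel (P : Kernel β β) (m : ℕ) :
    Kernel (Fin (m + 1) → β) (Fin (m + 2) → β) :=
  (Kernel.id ×ₖ P.comap (fun v => v (Fin.last m)) (measurable_pi_apply _)).map
    fun p => Fin.snoc p.1 p.2

instance (P : Kernel β β) [IsMarkovKernel P] (m : ℕ) : IsMarkovKernel (snocKernel P m) :=
  Kernel.IsMarkovKernel.map _ measurable_finSnoc

lemma snocKernel_apply (P : Kernel β β) [IsMarkovKernel P] (m : ℕ) (v : Fin (m + 1) → β) :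
    snocKernel P m v = (P (v (Fin.last m))).map (Fin.snoc v) := by
  rw [snocKernel, Kernel.map_apply _ measurable_finSnoc, Kernel.prod_apply, Kernel.id_apply,
    Kernel.comap_apply, Measure.dirac_prod,
    Measure.map_map measurable_finSnoc measurable_prodMk_left]
  rfl

lemma trajMeasure_succ (P : Kernel β β) [IsMarkovKernel P] (m : ℕ) (x : β) :
    trajMeasure P (m + 1) x = snocKernel P m ∘ₘ trajMeasure P m x := by
  rw [trajMeasure]
  congr with v : 1
  exact (snocKernel_apply P m v).symm

instance (P : Kernel β β) [IsMarkovKernel P] (m : ℕ) (x : β) :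
    IsProbabilityMeasure (trajMeasure P m x) := by
  induction m with
  | zero => rw [trajMeasure]; infer_instance
  | succ m ih => rw [trajMeasure_succ]; infer_instance

lemma integral_trajMeasure_succ (P : Kernel β β) [IsMarkovKernel P] (m : ℕ) (x : β)
    {g : (Fin (m + 2) → β) → ℝ} (hg : Measurable g) {C : ℝ} (hb : ∀ v, |g v| ≤ C) :
    ∫ v, g v ∂trajMeasure P (m + 1) x
      = ∫ v, ∫ z, g (Fin.snoc v z) ∂P (v (Fin.last m)) ∂trajMeasure P m x := by
  have hint : Integrable g (trajMeasure P (m + 1) x) :=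
    .of_bound hg.aestronglyMeasurable C (.of_forall hb)
  rw [trajMeasure_succ, Measure.comp_eq_comp_const_apply] at hint ⊢
  rw [Kernel.integral_comp hint, Kernel.const_apply]
  refine integral_congr_ae (.of_forall fun v => ?_)
  dsimp only
  have hsnoc : Measurable fun z : β => (Fin.snoc v z : Fin (m + 2) → β) :=
    measurable_finSnoc.comp measurable_prodMk_left
  rw [snocKernel_apply, integral_map hsnoc.aemeasurable hg.aestronglyMeasurable]

end Trajectory

section LipschitzInCoords

variable {X : Type*} [PseudoMetricSpace X]

/-- Weights are indexed by `ℕ` so that one weight sequence serves tuples of every length. -/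
def LipschitzInCoords {n : ℕ} (L : ℕ → ℝ) (g : (Fin n → X) → ℝ) : Prop :=
  ∀ v w, |g v - g w| ≤ ∑ j : Fin n, L j * dist (v j) (w j)

lemma LipschitzInCoords.continuous {n : ℕ} {L : ℕ → ℝ} (hL : ∀ j, 0 ≤ L j)
    {g : (Fin n → X) → ℝ} (hg : LipschitzInCoords L g) : Continuous g := by
  refine (LipschitzWith.of_dist_le' (K := ∑ j : Fin n, L j) fun v w => ?_).continuous
  rw [Real.dist_eq, Finset.sum_mul]
  exact (hg v w).trans <| Finset.sum_le_sum fun j _ =>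
    mul_le_mul_of_nonneg_left (dist_le_pi_dist v w j) (hL j)

lemma sum_mul_dist_snoc {n : ℕ} (L : ℕ → ℝ) (v w : Fin n → X) (z z' : X) :
    ∑ j : Fin (n + 1), L j * dist ((Fin.snoc v z : Fin (n + 1) → X) j)
        ((Fin.snoc w z' : Fin (n + 1) → X) j)
      = ∑ j : Fin n, L j * dist (v j) (w j) + L n * dist z z' := by
  simp [Fin.sum_univ_castSucc]

lemma sum_dist_dite_prefix_le {n p m : ℕ} (pre : Fin p → X) (e : Fin n → Fin m)
    (he : ∀ i j : Fin n, p ≤ i → p ≤ j → e i = e j → i = j) (v w : Fin m → X) :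
    ∑ i : Fin n, dist (if h : (i : ℕ) < p then pre ⟨i, h⟩ else v (e i))
      (if h : (i : ℕ) < p then pre ⟨i, h⟩ else w (e i)) ≤ ∑ j, dist (v j) (w j) := by
  classical
  let s := Finset.univ.filter fun i : Fin n => ¬(i : ℕ) < p
  calc _ = ∑ i ∈ s, dist (v (e i)) (w (e i)) := by
        rw [Finset.sum_filter]
        refine Finset.sum_congr rfl fun i _ => ?_
        split_ifs <;> simp
    _ = ∑ j ∈ s.image e, dist (v j) (w j) := by
        refine (Finset.sum_image (f := fun j => dist (v j) (w j))
          fun i hi j hj => he i j ?_ ?_).symm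
        · simpa [s] using hi
        · simpa [s] using hj
    _ ≤ _ := Finset.sum_le_univ_sum_of_nonneg fun _ => dist_nonneg

end LipschitzInCoords

section Contraction

variable {X : Type*} [MetricSpace X] [SecondCountableTopology X] [MeasurableSpace X]
  [BorelSpace X]

lemma LipschitzInCoords.integral_snoc (hdiam : ∀ x y : X, dist x y ≤ 1) {P : Kernel X X}
    [IsMarkovKernel P] {κ : ℝ} (hcontr : ∀ x y, W1 dist (P x) (P y) ≤ κ * dist x y) {m : ℕ}
    {L : ℕ → ℝ} (hL : ∀ j, 0 ≤ L j) {g : (Fin (m + 2) → X) → ℝ} {C : ℝ} (hb : ∀ v, |g v| ≤ C)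
    (hg : LipschitzInCoords L g) :
    LipschitzInCoords (fun j => L j + if j = m then κ * L (m + 1) else 0)
      fun v : Fin (m + 1) → X => ∫ z, g (Fin.snoc v z) ∂P (v (Fin.last m)) := by
  intro v w
  have hsnoc : ∀ u : Fin (m + 1) → X, Measurable fun z => g (Fin.snoc u z) := fun u =>
    (hg.continuous hL).measurable.comp (measurable_finSnoc.comp measurable_prodMk_left)
  have hint : ∀ u a, Integrable (fun z => g (Fin.snoc u z)) (P a) := fun u _ =>
    .of_bound (hsnoc u).aestronglyMeasurable C (.of_forall fun _ => hb _)
  have h₁ : |∫ z, g (Fin.snoc v z) ∂P (v (Fin.last m)) - ∫ z, g (Fin.snoc w z) ∂P (v (Fin.last m))|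
      ≤ ∑ j : Fin (m + 1), L j * dist (v j) (w j) := by
    rw [← integral_sub (hint v _) (hint w _)]
    refine abs_integral_le_of_forall_abs_le fun z => ?_
    simpa [sum_mul_dist_snoc] using hg (Fin.snoc v z) (Fin.snoc w z)
  have hLip : ∀ z z', |g (Fin.snoc w z) - g (Fin.snoc w z')| ≤ L (m + 1) * dist z z' :=
    fun z z' => by simpa [sum_mul_dist_snoc] using hg (Fin.snoc w z) (Fin.snoc w z')
  have h₂ : |∫ z, g (Fin.snoc w z) ∂P (v (Fin.last m)) - ∫ z, g (Fin.snoc w z) ∂P (w (Fin.last m))|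
      ≤ L (m + 1) * (κ * dist (v (Fin.last m)) (w (Fin.last m))) := by
    have h := fun a b => integral_sub_integral_le_mul_W1 hdiam (hsnoc w) (fun _ => hb _)
      (hL (m + 1)) hLip (P a) (P b)
    rw [abs_sub_le_iff, dist_comm]
    exact ⟨(h _ _).trans (mul_le_mul_of_nonneg_left ((hcontr _ _).trans_eq (by rw [dist_comm]))
      (hL _)), (h _ _).trans (mul_le_mul_of_nonneg_left (hcontr _ _) (hL _))⟩
  calc _ ≤ _ := abs_sub_le _ (∫ z, g (Fin.snoc w z) ∂P (v (Fin.last m))) _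
    _ ≤ _ := add_le_add h₁ h₂
    _ = _ := by
      simp only [Fin.sum_univ_castSucc (n := m), Fin.val_castSucc, Fin.val_last, add_mul, ite_mul,
        zero_mul, fun j : Fin m => j.isLt.ne, ↓reduceIte, add_zero]
      ring

theorem abs_integral_trajMeasure_sub_le (hdiam : ∀ x y : X, dist x y ≤ 1) (P : Kernel X X)
    [IsMarkovKernel P] {κ : ℝ} (hκ : 0 ≤ κ) (hcontr : ∀ x y, W1 dist (P x) (P y) ≤ κ * dist x y)
    {C : ℝ} (m : ℕ) {L : ℕ → ℝ} (hL : ∀ j, 0 ≤ L j) {g : (Fin (m + 1) → X) → ℝ}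
    (hb : ∀ v, |g v| ≤ C) (hg : LipschitzInCoords L g) (x y : X) :
    |∫ v, g v ∂trajMeasure P m x - ∫ v, g v ∂trajMeasure P m y|
      ≤ (∑ j ∈ Finset.range (m + 1), L j * κ ^ j) * dist x y := by
  induction m generalizing L with
  | zero => simpa [trajMeasure] using hg (fun _ => x) (fun _ => y)
  | succ m ih =>
    have hm := (hg.continuous hL).measurable
    rw [integral_trajMeasure_succ P m x hm hb, integral_trajMeasure_succ P m y hm hb]
    refine (ih (fun j => add_nonneg (hL j) ?_) ?_ (hg.integral_snoc hdiam hcontr hL hb)).trans_eq ?_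
    · split_ifs
      exacts [mul_nonneg hκ (hL _), le_rfl]
    · exact fun v => abs_integral_le_of_forall_abs_le fun z => hb _
    · congr 1
      simp only [add_mul, ite_mul, zero_mul, Finset.sum_add_distrib, Finset.sum_ite_eq',
        Finset.mem_range, lt_add_iff_pos_right, Order.lt_one_iff, ↓reduceIte,
        Finset.sum_range_succ _ (m + 1), pow_succ, add_right_inj]
      ring

end Contraction

/-- **Lemma (bounded differences for the empirical Wasserstein distance).** For a
`W₁`-contracting Markov chain on a Polish space of diameter at most 1 with invariant
measure `μ`, the martingale differences `Δ_k` of `f(x₁, …, x_n) = W₁(μ, n⁻¹ ∑ δ_{x_k})`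
satisfy, by the Markov property (`Δ_k(…, x) - Δ_k(…, y)` being
`E^x f(x₁, …, x_{k-1}, x, X₁, …, X_{n-k}) - E^y f(x₁, …, x_{k-1}, y, X₁, …, X_{n-k})`):
`|Δ_k(x₁,…,x_{k-1},x) - Δ_k(x₁,…,x_{k-1},y)| ≤ n⁻¹ (∑_{j=0}^{n-k} κ^j) d(x,y)
  ≤ d(x,y)/(n(1-κ))`. -/
theorem bounded_differences_empirical_wasserstein
    {𝒳 : Type*} [MetricSpace 𝒳] [PolishSpace 𝒳] [MeasurableSpace 𝒳] [BorelSpace 𝒳]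
    (hdiam : ∀ x y : 𝒳, dist x y ≤ 1)
    (P : Kernel 𝒳 𝒳) [IsMarkovKernel P]
    (κ : ℝ) (hκ : κ ∈ Set.Ioo (0 : ℝ) 1)
    (hcontr : ∀ x y : 𝒳, W1 dist (P x) (P y) ≤ κ * dist x y)
    (μ : Measure 𝒳) [IsProbabilityMeasure μ]
    (n k : ℕ)
    (pre : Fin (k - 1) → 𝒳) (x y : 𝒳) :
    |(∫ v : Fin ((n - k) + 1) → 𝒳,
          W1 dist μ ((n : ENNReal)⁻¹ • ∑ i : Fin n, Measure.dirac
            (if h : (i : ℕ) < k - 1 then pre ⟨i, h⟩ else v ⟨(i : ℕ) - (k - 1), by omega⟩))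
          ∂(trajMeasure P (n - k) x)) -
        ∫ v : Fin ((n - k) + 1) → 𝒳,
          W1 dist μ ((n : ENNReal)⁻¹ • ∑ i : Fin n, Measure.dirac
            (if h : (i : ℕ) < k - 1 then pre ⟨i, h⟩ else v ⟨(i : ℕ) - (k - 1), by omega⟩))
          ∂(trajMeasure P (n - k) y)|
      ≤ (n : ℝ)⁻¹ * (∑ j ∈ Finset.range ((n - k) + 1), κ ^ j) * dist x y ∧
    (n : ℝ)⁻¹ * (∑ j ∈ Finset.range ((n - k) + 1), κ ^ j) * dist x y
      ≤ dist x y / (n * (1 - κ)) := by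
  let e : Fin n → Fin (n - k + 1) := fun i => ⟨i - (k - 1), by omega⟩
  have he : ∀ i j : Fin n, k - 1 ≤ i → k - 1 ≤ j → e i = e j → i = j := fun i j hi hj hij =>
    Fin.ext (by have := congrArg Fin.val hij; simp only [e] at this; omega)
  have hLip : LipschitzInCoords (fun _ => (n : ℝ)⁻¹) fun v : Fin (n - k + 1) → 𝒳 =>
      W1 dist μ (empiricalMeasure fun i : Fin n =>
        if h : (i : ℕ) < k - 1 then pre ⟨i, h⟩ else v (e i)) := fun v w => by
    rw [← Finset.mul_sum]
    exact (abs_W1_empiricalMeasure_sub_le hdiam μ _ _).trans <|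
      mul_le_mul_of_nonneg_left (sum_dist_dite_prefix_le pre e he v w) (by positivity)
  have hbound := abs_integral_trajMeasure_sub_le hdiam P hκ.1.le hcontr (n - k)
    (fun _ => inv_nonneg.2 n.cast_nonneg)
    (fun _ => abs_W1_le_one (fun _ _ => dist_nonneg) hdiam _ _) hLip x y
  rw [← Finset.mul_sum] at hbound
  refine ⟨hbound, ?_⟩
  have hgeom : ∑ j ∈ Finset.range (n - k + 1), κ ^ j ≤ (1 - κ)⁻¹ := by
    have h := geom_sum_Ico_le_of_lt_one (m := 0) (n := n - k + 1) hκ.1.le hκ.2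
    rwa [← Finset.range_eq_Ico, pow_zero, one_div] at h
  calc _ ≤ (n : ℝ)⁻¹ * (1 - κ)⁻¹ * dist x y := by gcongr
    _ = dist x y / (n * (1 - κ)) := by rw [div_eq_mul_inv, mul_inv]; ring
end
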